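/- arXiv:1802.08246 — 5 statements merged into one kernel-verified Lean document; each statement's English description precedes it below -/
import Mathlib

section
/- For the exponential loss empirical objective L(w) = ∑_{n=1}^N exp(-⟨w, x_n⟩) on data points x_1,...,x_N ∈ ℝ^d, if there exists a unit-norm vector achieving margin γ > 0 (i.e., ‖u‖ ≤ 1 and ⟨u, x_n⟩ ≥ γ for all n), then for every w ∈ ℝ^d, ‖∇L(w)‖_* ≥ γ · L(w), where ‖·‖_* is the dual of the norm ‖·‖. -/
/-!
Test the dual norm against `-u`: `⟨∇L(w), -u⟩ = ∑ n exp(-⟨w, x_n⟩) ⟨u, x_n⟩ ≥ γ L(w)`.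
Since `dualNorm` is an `sSup`, which is `0` for sets unbounded above, this needs the unit
ball of `N` to be bounded: `N` is convex, hence continuous, hence bounded below by some
`m > 0` on the compact Euclidean unit sphere, so `N v ≥ m ‖v‖`.
-/

open Filter Topology Finset
open scoped RealInnerProductSpace BigOperators

noncomputable section

abbrev Euc (d : ℕ) := EuclideanSpace ℝ (Fin d)

def IsNorm {d : ℕ} (N : Euc d → ℝ) : Prop :=
  (∀ v, N v = 0 ↔ v = 0) ∧ (∀ (c : ℝ) (v), N (c • v) = |c| * N v) ∧
  (∀ v w, N (v + w) ≤ N v + N w)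

def dualNorm {d : ℕ} (N : Euc d → ℝ) (y : Euc d) : ℝ :=
  sSup {s | ∃ v, N v ≤ 1 ∧ s = ⟪y, v⟫}

def expLoss {d N : ℕ} (x : Fin N → Euc d) (u : Euc d) : ℝ :=
  ∑ n, Real.exp (-⟪u, x n⟫)

/-- The negative gradient `-∇L(w) = ∑ n exp(-⟨w,x_n⟩) x_n` of the exponential loss. -/
def negGrad {d N : ℕ} (x : Fin N → Euc d) (u : Euc d) : Euc d :=
  ∑ n, Real.exp (-⟪u, x n⟫) • x n

namespace IsNorm

variable {d : ℕ} {N : Euc d → ℝ}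

lemma map_smul_of_nonneg (h : IsNorm N) {c : ℝ} (hc : 0 ≤ c) (v : Euc d) :
    N (c • v) = c * N v := by
  rw [h.2.1, abs_of_nonneg hc]

lemma map_neg (h : IsNorm N) (v : Euc d) : N (-v) = N v := by
  simpa using h.2.1 (-1) v

lemma nonneg (h : IsNorm N) (v : Euc d) : 0 ≤ N v := by
  have htri := h.2.2 v (-v)
  rw [add_neg_cancel, (h.1 0).2 rfl, h.map_neg] at htri
  linarith

lemma pos (h : IsNorm N) {v : Euc d} (hv : v ≠ 0) : 0 < N v :=
  (h.nonneg v).lt_of_ne fun h0 => hv ((h.1 v).1 h0.symm)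

lemma convexOn (h : IsNorm N) : ConvexOn ℝ Set.univ N :=
  ⟨convex_univ, fun v _ w _ a b ha hb _ =>
    (h.2.2 _ _).trans_eq <| by
      rw [h.map_smul_of_nonneg ha, h.map_smul_of_nonneg hb, smul_eq_mul, smul_eq_mul]⟩

lemma continuous (h : IsNorm N) : Continuous N :=
  continuousOn_univ.1 <| h.convexOn.continuousOn isOpen_univ

lemma exists_pos_mul_norm_le (h : IsNorm N) : ∃ m, 0 < m ∧ ∀ v, m * ‖v‖ ≤ N v := by
  obtain ⟨m, hm, hmin⟩ := (isCompact_sphere (0 : Euc d) 1).exists_forall_le'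
    h.continuous.continuousOn fun v hv => h.pos (ne_zero_of_mem_unit_sphere ⟨v, hv⟩)
  refine ⟨m, hm, fun v => ?_⟩
  rcases eq_or_ne v 0 with rfl | hv
  · simpa using h.nonneg 0
  have hunit : ‖v‖⁻¹ • v ∈ Metric.sphere (0 : Euc d) 1 := by
    simp [norm_smul, hv]
  have hpos : 0 < ‖v‖ := norm_pos_iff.2 hv
  calc m * ‖v‖ ≤ N (‖v‖⁻¹ • v) * ‖v‖ := by gcongr; exact hmin _ hunit
    _ = N v := by rw [h.map_smul_of_nonneg (inv_nonneg.2 hpos.le)]; field_simp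

lemma bddAbove_inner (h : IsNorm N) (y : Euc d) :
    BddAbove {s | ∃ v, N v ≤ 1 ∧ s = ⟪y, v⟫} := by
  obtain ⟨m, hm, hle⟩ := h.exists_pos_mul_norm_le
  refine ⟨‖y‖ * (1 / m), ?_⟩
  rintro _ ⟨v, hv, rfl⟩
  have hvm : ‖v‖ ≤ 1 / m := (le_div_iff₀' hm).2 ((hle v).trans hv)
  calc ⟪y, v⟫ ≤ ‖y‖ * ‖v‖ := real_inner_le_norm y v
    _ ≤ ‖y‖ * (1 / m) := by gcongr

lemma inner_le_dualNorm (h : IsNorm N) (y : Euc d) {v : Euc d} (hv : N v ≤ 1) :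
    ⟪y, v⟫ ≤ dualNorm N y :=
  le_csSup (h.bddAbove_inner y) ⟨v, hv, rfl⟩

end IsNorm

lemma inner_negGrad {d N : ℕ} (x : Fin N → Euc d) (w u : Euc d) :
    ⟪negGrad x w, u⟫ = ∑ n, Real.exp (-⟪w, x n⟫) * ⟪u, x n⟫ := by
  rw [negGrad, sum_inner]
  exact sum_congr rfl fun n _ => by rw [real_inner_smul_left, real_inner_comm (x n) u]

lemma margin_mul_expLoss_le_inner_negGrad {d N : ℕ} {x : Fin N → Euc d} {γ : ℝ} {u : Euc d}
    (hmargin : ∀ n, γ ≤ ⟪u, x n⟫) (w : Euc d) :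
    γ * expLoss x w ≤ ⟪negGrad x w, u⟫ := by
  rw [inner_negGrad, expLoss, mul_sum]
  refine sum_le_sum fun n _ => ?_
  rw [mul_comm γ]
  exact mul_le_mul_of_nonneg_left (hmargin n) (Real.exp_pos _).le

theorem dualNorm_grad_ge_margin_mul_loss_general {d N : ℕ} (Nrm : Euc d → ℝ)
    (hNrm : IsNorm Nrm) (x : Fin N → Euc d)
    (γ : ℝ) (u : Euc d) (hu : Nrm u ≤ 1)
    (hmargin : ∀ n, γ ≤ ⟪u, x n⟫) (w : Euc d) :
    γ * expLoss x w ≤ dualNorm Nrm (-(negGrad x w)) :=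
  calc γ * expLoss x w ≤ ⟪negGrad x w, u⟫ := margin_mul_expLoss_le_inner_negGrad hmargin w
    _ = ⟪-(negGrad x w), -u⟫ := (inner_neg_neg _ _).symm
    _ ≤ dualNorm Nrm (-(negGrad x w)) := hNrm.inner_le_dualNorm _ (by rwa [hNrm.map_neg])

/-- if a unit-norm vector achieves margin γ > 0, then
`‖∇L(w)‖_* ≥ γ · L(w)` for every w. -/
theorem dualNorm_grad_ge_margin_mul_loss {d N : ℕ} (Nrm : Euc d → ℝ)
    (hNrm : IsNorm Nrm) (x : Fin N → Euc d)
    (γ : ℝ) (hγ : 0 < γ) (u : Euc d) (hu : Nrm u ≤ 1)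
    (hmargin : ∀ n, γ ≤ ⟪u, x n⟫) (w : Euc d) :
    γ * expLoss x w ≤ dualNorm Nrm (-(negGrad x w)) :=
  dualNorm_grad_ge_margin_mul_loss_general Nrm hNrm x γ u hu hmargin w

end
end

section
/- Let ψ : ℝ^d → ℝ be strictly convex and differentiable, and let data x_1,...,x_N ∈ ℝ^d, y_1,...,y_N ∈ ℝ define the affine set G = {w : ⟨w,x_n⟩ = y_n for all n}, assumed nonempty. If w* ∈ G satisfies ∇ψ(w*) - ∇ψ(w_0) ∈ span{x_1,...,x_N} for a given initialization w_0, then w* is the unique minimizer over G of the Bregman divergence D_ψ(w, w_0) = ψ(w) - ψ(w_0) - ⟨∇ψ(w_0), w - w_0⟩. -/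
open Filter Topology Finset
open scoped RealInnerProductSpace BigOperators

noncomputable section

/-- Bregman divergence of ψ. -/
def breg {d : ℕ} (ψ : Euc d → ℝ) (w w' : Euc d) : ℝ :=
  ψ w - ψ w' - ⟪gradient ψ w', w - w'⟫

/-!
Expanding the Bregman divergence gives the three-point identity
`D(w, w₀) - D(w*, w₀) = D(w, w*) + ⟪∇ψ(w*) - ∇ψ(w₀), w - w*⟫`.
For `w ∈ G` the vector `w - w*` is orthogonal to every `x_n`, hence to their span, so the last
term vanishes; and `D(w, w*) > 0` for `w ≠ w*` by strict convexity.
-/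

theorem StrictConvexOn.comp_affineMap {𝕜 E F β : Type*} [Field 𝕜] [LinearOrder 𝕜]
    [AddCommGroup E] [AddCommGroup F] [AddCommMonoid β] [PartialOrder β]
    [Module 𝕜 E] [Module 𝕜 F] [SMul 𝕜 β] {f : F → β} {s : Set F}
    (hf : StrictConvexOn 𝕜 s f) (g : E →ᵃ[𝕜] F) (hg : Function.Injective g) :
    StrictConvexOn 𝕜 (g ⁻¹' s) (f ∘ g) :=
  ⟨hf.1.affine_preimage _, fun x hx y hy hxy a b ha hb hab =>
    calc
      (f ∘ g) (a • x + b • y) = f (a • g x + b • g y) := by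
        rw [Function.comp_apply, Convex.combo_affine_apply hab]
      _ < a • f (g x) + b • f (g y) := hf.2 hx hy (hg.ne hxy) ha hb hab⟩

theorem StrictConvexOn.hasFDerivAt_apply_sub_lt {E : Type*} [NormedAddCommGroup E]
    [NormedSpace ℝ E] {f : E → ℝ} {f' : E →L[ℝ] ℝ} {s : Set E} {a b : E}
    (hf : StrictConvexOn ℝ s f) (ha : a ∈ s) (hb : b ∈ s) (hab : a ≠ b)
    (hf' : HasFDerivAt f f' a) :
    f' (b - a) < f b - f a := by
  set ℓ : ℝ →ᵃ[ℝ] E := AffineMap.lineMap a b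
  have hline : StrictConvexOn ℝ (ℓ ⁻¹' s) (f ∘ ℓ) :=
    hf.comp_affineMap ℓ (AffineMap.lineMap_injective ℝ hab)
  have hℓ0 : ℓ 0 = a := AffineMap.lineMap_apply_zero a b
  have hℓ1 : ℓ 1 = b := AffineMap.lineMap_apply_one a b
  have hderiv : HasDerivAt (f ∘ ℓ) (f' (b - a)) 0 := by
    rw [← hℓ0] at hf'
    exact hf'.comp_hasDerivAt 0 AffineMap.hasDerivAt_lineMap
  have hslope := hline.lt_slope_of_hasDerivAt (by simpa [hℓ0] using ha)
    (by simpa [hℓ1] using hb) zero_lt_one hderiv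
  simpa [slope_def_field, hℓ0, hℓ1] using hslope

theorem breg_pos {d : ℕ} {ψ : Euc d → ℝ} (hconv : StrictConvexOn ℝ Set.univ ψ)
    {w w' : Euc d} (hdiff : DifferentiableAt ℝ ψ w') (hne : w ≠ w') :
    0 < breg ψ w w' := by
  have hgrad := hconv.hasFDerivAt_apply_sub_lt (Set.mem_univ w') (Set.mem_univ w) hne.symm
    hdiff.hasGradientAt.hasFDerivAt
  rw [InnerProductSpace.toDual_apply_apply] at hgrad
  unfold breg
  linarith

theorem breg_sub_breg {d : ℕ} (ψ : Euc d → ℝ) (w w' w₀ : Euc d) :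
    breg ψ w w₀ - breg ψ w' w₀ =
      breg ψ w w' + ⟪gradient ψ w' - gradient ψ w₀, w - w'⟫ := by
  have hsplit : w - w₀ = (w - w') + (w' - w₀) := by abel
  simp only [breg, hsplit, inner_add_right, inner_sub_left]
  ring

theorem inner_eq_zero_of_mem_span_range {E ι : Type*} [NormedAddCommGroup E]
    [InnerProductSpace ℝ E] {x : ι → E} {v z : E} (hv : ∀ i, ⟪v, x i⟫ = 0)
    (hz : z ∈ Submodule.span ℝ (Set.range x)) :
    ⟪v, z⟫ = 0 := by
  have hspan : Submodule.span ℝ (Set.range x) ≤ (ℝ ∙ v)ᗮ :=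
    Submodule.span_le.2 <| Set.range_subset_iff.2 fun i =>
      Submodule.mem_orthogonal_singleton_iff_inner_right.2 (hv i)
  exact Submodule.mem_orthogonal_singleton_iff_inner_right.1 (hspan hz)

/-- if `w*` interpolates the data and `∇ψ(w*) - ∇ψ(w₀)` lies in the span of the
data, then `w*` is the unique minimizer of the Bregman divergence `D_ψ(·, w₀)` over the
interpolating set `G`. -/
theorem bregman_unique_minimizer {d N : ℕ} (ψ : Euc d → ℝ)
    (hconv : StrictConvexOn ℝ Set.univ ψ) (hdiff : Differentiable ℝ ψ)
    (x : Fin N → Euc d) (y : Fin N → ℝ) (w₀ wstar : Euc d)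
    (hfeas : ∀ n, ⟪wstar, x n⟫ = y n)
    (hstat : gradient ψ wstar - gradient ψ w₀ ∈ Submodule.span ℝ (Set.range x)) :
    ∀ w : Euc d, (∀ n, ⟪w, x n⟫ = y n) → w ≠ wstar →
      breg ψ wstar w₀ < breg ψ w w₀ := by
  intro w hw hne
  have horth : ⟪w - wstar, gradient ψ wstar - gradient ψ w₀⟫ = 0 :=
    inner_eq_zero_of_mem_span_range
      (fun n => by rw [inner_sub_left, hw n, hfeas n, sub_self]) hstat
  have hpos := breg_pos hconv (hdiff wstar) hne
  have hthree := breg_sub_breg ψ w wstar w₀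
  rw [real_inner_comm] at horth
  linarith

end
end

section
/- Let L be convex and twice differentiable with v^⊤∇²L(w)v ≤ B² L(w)‖v‖² for all w, v. For the steepest descent step w_{t+1} = w_t + η_t Δw_t with ⟨Δw_t, -∇L(w_t)⟩ = ‖Δw_t‖² = ‖∇L(w_t)‖_*² and step size η_t = c_t/(B² L(w_t)) with 0 < c_t ≤ √2, one has L(w_{t+1}) ≤ L(w_t). -/
open Filter Topology Finset
open scoped RealInnerProductSpace BigOperators

noncomputable section

/-! Along the segment `t ↦ w + t • η • Δ` the loss starts with slope `-η Nrm(Δ)²`, and wherever it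
is at most `L w` the Hessian bound caps its second derivative by `B² L(w) η² Nrm(Δ)² = c η Nrm(Δ)²`.
Hence on a stretch `[0, τ]` where the loss stays at most `L w`, Taylor's bound gives
`L ≤ L w - η Nrm(Δ)² τ (1 - c τ / 2) < L w` since `c ≤ √2 < 2`: the loss can never climb back
to `L w` on `(0, 1]`. -/

theorem HasDerivAt.eventually_lt_of_neg {f : ℝ → ℝ} {f' x : ℝ} (hf : HasDerivAt f f' x)
    (hf' : f' < 0) : ∀ᶠ t in 𝓝[>] x, f t < f x := by
  filter_upwards [hf.hasDerivWithinAt.limsup_slope_le' (lt_irrefl x) hf', self_mem_nhdsWithin]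
    with t hslope hxt
  rw [slope_def_field, div_lt_iff₀ (sub_pos.mpr hxt)] at hslope
  linarith

theorem le_add_deriv_mul_add_of_deriv2_le {f f' f'' : ℝ → ℝ} {a b K : ℝ} (hab : a ≤ b)
    (hf : ∀ t ∈ Set.Icc a b, HasDerivAt f (f' t) t)
    (hf' : ∀ t ∈ Set.Icc a b, HasDerivAt f' (f'' t) t)
    (hK : ∀ t ∈ Set.Ico a b, f'' t ≤ K) :
    f b ≤ f a + f' a * (b - a) + K * (b - a) ^ 2 / 2 := by
  have hline : ∀ t, HasDerivAt (fun s => f' a + K * (s - a)) K t := fun t => by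
    simpa using ((hasDerivAt_id t).sub_const a).const_mul K |>.const_add (f' a)
  have hquad : ∀ t, HasDerivAt (fun s => f a + f' a * (s - a) + K * (s - a) ^ 2 / 2)
      (f' a + K * (t - a)) t := fun t => by
    have h := (((hasDerivAt_id t).sub_const a).const_mul (f' a)).const_add (f a) |>.add
      ((((hasDerivAt_id t).sub_const a).pow 2).const_mul K |>.div_const 2)
    refine h.congr_deriv ?_
    simp only [id, Nat.cast_ofNat]
    ring
  have hf'_le : ∀ t ∈ Set.Icc a b, f' t ≤ f' a + K * (t - a) :=
    image_le_of_deriv_right_le_deriv_boundary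
      (fun t ht => (hf' t ht).continuousAt.continuousWithinAt)
      (fun t ht => (hf' t (Set.Ico_subset_Icc_self ht)).hasDerivWithinAt) (by simp)
      (fun t _ => (hline t).continuousAt.continuousWithinAt)
      (fun t _ => (hline t).hasDerivWithinAt) hK
  exact image_le_of_deriv_right_le_deriv_boundary
    (fun t ht => (hf t ht).continuousAt.continuousWithinAt)
    (fun t ht => (hf t (Set.Ico_subset_Icc_self ht)).hasDerivWithinAt) (by simp)
    (fun t _ => (hquad t).continuousAt.continuousWithinAt)
    (fun t _ => (hquad t).hasDerivWithinAt) (fun t ht => hf'_le t (Set.Ico_subset_Icc_self ht))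
    ⟨hab, le_rfl⟩

theorem apply_one_le_apply_zero_of_deriv2_le_on_sublevel {f f' f'' : ℝ → ℝ} {K : ℝ}
    (hf : ∀ t ∈ Set.Icc (0 : ℝ) 1, HasDerivAt f (f' t) t)
    (hf' : ∀ t ∈ Set.Icc (0 : ℝ) 1, HasDerivAt f' (f'' t) t)
    (hslope : f' 0 < 0) (hK : K < -2 * f' 0)
    (hbound : ∀ t ∈ Set.Icc (0 : ℝ) 1, f t ≤ f 0 → f'' t ≤ K) : f 1 ≤ f 0 := by
  by_contra! h1
  obtain ⟨u, hu, hfu⟩ := mem_nhdsGT_iff_exists_Ioo_subset.mp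
    ((hf 0 (Set.left_mem_Icc.mpr zero_le_one)).eventually_lt_of_neg hslope)
  set δ := min u 1
  have hδ : 0 < δ := lt_min hu zero_lt_one
  -- `sInf S` is the first time after `δ` at which `f` is back at level `f 0`.
  set S := {t ∈ Set.Icc δ 1 | f 0 ≤ f t}
  have hS : IsClosed S := ContinuousOn.preimage_isClosed_of_isClosed
    (fun t ht => (hf t (Set.Icc_subset_Icc hδ.le le_rfl ht)).continuousAt.continuousWithinAt)
    isClosed_Icc isClosed_Ici
  have h1S : (1 : ℝ) ∈ S := ⟨⟨min_le_right u 1, le_rfl⟩, h1.le⟩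
  have hτS : sInf S ∈ S := hS.csInf_mem ⟨1, h1S⟩ ⟨δ, fun t ht => ht.1.1⟩
  obtain ⟨⟨hδτ, hτ1⟩, hfτ⟩ := hτS
  have hsub : ∀ t ∈ Set.Ico 0 (sInf S), f t ≤ f 0 := by
    rintro t ⟨ht0, htτ⟩
    rcases ht0.eq_or_lt with rfl | ht0
    · exact le_rfl
    rcases lt_or_ge t δ with htδ | hδt
    · exact (hfu ⟨ht0, htδ.trans_le (min_le_left u 1)⟩).le
    · by_contra! h
      exact notMem_of_lt_csInf htτ ⟨δ, fun t ht => ht.1.1⟩ ⟨⟨hδt, htτ.le.trans hτ1⟩, h.le⟩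
  have htaylor := le_add_deriv_mul_add_of_deriv2_le (hδ.le.trans hδτ)
    (fun t ht => hf t ⟨ht.1, ht.2.trans hτ1⟩) (fun t ht => hf' t ⟨ht.1, ht.2.trans hτ1⟩)
    (fun t ht => hbound t ⟨ht.1, ht.2.le.trans hτ1⟩ (hsub t ht))
  have hτ : 0 < sInf S := hδ.trans_le hδτ
  have hKτ : K * sInf S < -2 * f' 0 := by
    rcases le_or_gt 0 K with hK0 | hK0 <;> nlinarith
  nlinarith [mul_lt_mul_of_pos_left hKτ hτ]

section

variable {E : Type*} [NormedAddCommGroup E] [NormedSpace ℝ E] {L : E → ℝ} {w v : E} {t : ℝ}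

theorem DifferentiableAt.hasDerivAt_comp_add_smul (hL : DifferentiableAt ℝ L (w + t • v)) :
    HasDerivAt (fun s : ℝ => L (w + s • v)) (fderiv ℝ L (w + t • v) v) t := by
  have hline : HasDerivAt (fun s : ℝ => w + s • v) v t := by
    simpa using ((hasDerivAt_id t).smul_const v).const_add w
  exact hL.hasFDerivAt.comp_hasDerivAt t hline

theorem DifferentiableAt.hasDerivAt_fderiv_apply_comp_add_smul
    (hL : DifferentiableAt ℝ (fderiv ℝ L) (w + t • v)) :
    HasDerivAt (fun s : ℝ => fderiv ℝ L (w + s • v) v)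
      (iteratedFDeriv ℝ 2 L (w + t • v) ![v, v]) t := by
  have happly : DifferentiableAt ℝ (fun x => fderiv ℝ L x v) (w + t • v) :=
    hL.clm_apply (differentiableAt_const v)
  convert happly.hasDerivAt_comp_add_smul using 1
  rw [iteratedFDeriv_two_apply, fderiv_clm_apply hL (differentiableAt_const v)]
  simp

theorem apply_add_le_of_iteratedFDeriv_le_on_sublevel (hL : ContDiff ℝ 2 L) {K : ℝ}
    (hslope : fderiv ℝ L w v < 0) (hK : K < -2 * fderiv ℝ L w v)
    (hbound : ∀ t ∈ Set.Icc (0 : ℝ) 1, L (w + t • v) ≤ L w →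
      iteratedFDeriv ℝ 2 L (w + t • v) ![v, v] ≤ K) :
    L (w + v) ≤ L w := by
  have hL1 : Differentiable ℝ L := hL.differentiable (by norm_num)
  have hL2 : Differentiable ℝ (fderiv ℝ L) :=
    (hL.fderiv_right (m := 1) (by norm_num)).differentiable (by norm_num)
  simpa using apply_one_le_apply_zero_of_deriv2_le_on_sublevel (f := fun s : ℝ => L (w + s • v))
    (fun s _ => (hL1 _).hasDerivAt_comp_add_smul)
    (fun s _ => (hL2 _).hasDerivAt_fderiv_apply_comp_add_smul)
    (by simpa using hslope) (by simpa using hK) (by simpa using hbound)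

end

theorem steepest_descent_step_decreases_general {d : ℕ} (Nrm : Euc d → ℝ) (hNrm : IsNorm Nrm)
    (L : Euc d → ℝ) (hsmooth : ContDiff ℝ 2 L)
    (B : ℝ) (hB : 0 < B)
    (hhess : ∀ u v : Euc d, iteratedFDeriv ℝ 2 L u ![v, v] ≤ B ^ 2 * L u * (Nrm v) ^ 2)
    (w Δ : Euc d) (hLpos : 0 < L w) (c η : ℝ) (hc : 0 < c) (hc2 : c ≤ Real.sqrt 2)
    (hη : η = c / (B ^ 2 * L w))
    (hd1 : ⟪Δ, -gradient L w⟫ = (Nrm Δ) ^ 2) :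
    L (w + η • Δ) ≤ L w := by
  rcases eq_or_ne Δ 0 with rfl | hΔ
  · simp
  obtain ⟨hN0, hNsmul, -⟩ := hNrm
  have ha : 0 < Nrm Δ ^ 2 := sq_pos_of_ne_zero ((hN0 Δ).not.mpr hΔ)
  have hηpos : 0 < η := hη ▸ by positivity
  have hBη : B ^ 2 * L w * η = c := by rw [hη]; field_simp
  have hc2 : c < 2 := hc2.trans_lt (by norm_num [Real.sqrt_lt'])
  have hslope : fderiv ℝ L w (η • Δ) = -(η * Nrm Δ ^ 2) := by
    rw [map_smul, ← inner_gradient_left, real_inner_comm, ← hd1, inner_neg_right, smul_eq_mul]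
    ring
  refine apply_add_le_of_iteratedFDeriv_le_on_sublevel hsmooth (K := c * η * Nrm Δ ^ 2)
    (by rw [hslope]; nlinarith)
    (by rw [hslope]; nlinarith [mul_lt_mul_of_pos_right hc2 (mul_pos hηpos ha)])
    fun t _ hle => ?_
  calc iteratedFDeriv ℝ 2 L (w + t • η • Δ) ![η • Δ, η • Δ]
      ≤ B ^ 2 * L (w + t • η • Δ) * Nrm (η • Δ) ^ 2 := hhess _ _
    _ ≤ B ^ 2 * L w * Nrm (η • Δ) ^ 2 := by gcongr
    _ = c * η * Nrm Δ ^ 2 := by rw [hNsmul, abs_of_pos hηpos, ← hBη]; ring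

/-- one step of steepest descent with `η = c/(B² L(w))`, `0 < c ≤ √2`, on a
convex twice-differentiable `L` whose Hessian quadratic form satisfies
`v⊤∇²L(w)v ≤ B² L(w) ‖v‖²`, does not increase the loss. -/
theorem steepest_descent_step_decreases {d : ℕ} (Nrm : Euc d → ℝ) (hNrm : IsNorm Nrm)
    (L : Euc d → ℝ) (hconv : ConvexOn ℝ Set.univ L) (hsmooth : ContDiff ℝ 2 L)
    (B : ℝ) (hB : 0 < B)
    (hhess : ∀ u v : Euc d, iteratedFDeriv ℝ 2 L u ![v, v] ≤ B ^ 2 * L u * (Nrm v) ^ 2)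
    (w Δ : Euc d) (hLpos : 0 < L w) (c η : ℝ) (hc : 0 < c) (hc2 : c ≤ Real.sqrt 2)
    (hη : η = c / (B ^ 2 * L w))
    (hd1 : ⟪Δ, -gradient L w⟫ = (Nrm Δ) ^ 2)
    (hd2 : (Nrm Δ) ^ 2 = (dualNorm Nrm (gradient L w)) ^ 2) :
    L (w + η • Δ) ≤ L w :=
  steepest_descent_step_decreases_general Nrm hNrm L hsmooth B hB hhess w Δ hLpos c η hc hc2 hη hd1

end
end

section
/- Suppose w_t = w̄ g(t) + ρ(t) with g(t) → ∞, ρ(t)/g(t) → 0, min_n ⟨x_n, w̄⟩ = γ > 0 attained exactly on the support set S, and second-smallest margin γ̄ = min_{n∉S} ⟨x_n, w̄⟩ > γ. Write -∇L(w_t) = I(t) + II(t) where I(t) = ∑_{n∈S} exp(-⟨w_t, x_n⟩) x_n and II(t) = ∑_{n∉S} exp(-⟨w_t, x_n⟩) x_n, L being the exponential loss. If the submatrix X_S of support vectors has full row rank (σ_{|S|}(X_S) > 0), then ‖II(t)‖ / ‖I(t)‖ → 0 as t → ∞. -/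
open Filter Topology Finset
open scoped RealInnerProductSpace BigOperators

noncomputable section

/-- along iterates `w_t = g(t) w̄ + ρ(t)` with `g(t) → ∞`, `ρ(t)/g(t) → 0`,
minimum margin `γ > 0` attained exactly on the (linearly independent, nonempty) support set
`S`, and second-smallest margin `γ̄ > γ`, the non-support part of the negative gradient of
the exponential loss vanishes relative to the support part: `‖II(t)‖/‖I(t)‖ → 0`. -/
theorem non_support_gradient_vanishes {d N : ℕ} (x : Fin N → Euc d)
    (wbar : Euc d) (w : ℕ → Euc d) (g : ℕ → ℝ) (ρ : ℕ → Euc d)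
    (hdecomp : ∀ t, w t = g t • wbar + ρ t)
    (hg : Tendsto g atTop atTop)
    (hρ : Tendsto (fun t => (g t)⁻¹ • ρ t) atTop (𝓝 0))
    (γ γbar : ℝ) (hγ : 0 < γ) (hmin : ∀ n, γ ≤ ⟪x n, wbar⟫)
    (S : Finset (Fin N)) (hS : ∀ n, n ∈ S ↔ ⟪x n, wbar⟫ = γ) (hSne : S.Nonempty)
    (hγbar : γ < γbar) (hbar : ∀ n ∉ S, γbar ≤ ⟪x n, wbar⟫)
    (hrank : LinearIndependent ℝ (fun n : S => x n)) :
    Tendsto (fun t =>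
        ‖∑ n ∈ Sᶜ, Real.exp (-⟪w t, x n⟫) • x n‖ /
          ‖∑ n ∈ S, Real.exp (-⟪w t, x n⟫) • x n‖) atTop (𝓝 0) := by
  obtain ⟨n0, hn0⟩ := hSne
  have hwn0 : ⟪x n0, wbar⟫ = γ := (hS n0).1 hn0
  have hwbar : wbar ≠ 0 := by
    intro h
    rw [h, inner_zero_right] at hwn0
    linarith
  have hwpos : 0 < ‖wbar‖ := norm_pos_iff.2 hwbar
  -- Lower bound on the support part
  have hIlow : ∀ t, γ * Real.exp (-⟪w t, x n0⟫) / ‖wbar‖ ≤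
      ‖∑ n ∈ S, Real.exp (-⟪w t, x n⟫) • x n‖ := by
    intro t
    rw [div_le_iff₀ hwpos]
    have h1 : γ * Real.exp (-⟪w t, x n0⟫) ≤ ∑ n ∈ S, Real.exp (-⟪w t, x n⟫) * γ := by
      have h : Real.exp (-⟪w t, x n0⟫) * γ ≤ ∑ n ∈ S, Real.exp (-⟪w t, x n⟫) * γ :=
        Finset.single_le_sum (f := fun n => Real.exp (-⟪w t, x n⟫) * γ)
          (fun n _ => by positivity) hn0
      rw [mul_comm]
      exact h
    have h2 : ∑ n ∈ S, Real.exp (-⟪w t, x n⟫) * γ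
        = ⟪∑ n ∈ S, Real.exp (-⟪w t, x n⟫) • x n, wbar⟫ := by
      rw [sum_inner]
      refine Finset.sum_congr rfl fun n hn => ?_
      rw [real_inner_smul_left, (hS n).1 hn]
    calc γ * Real.exp (-⟪w t, x n0⟫) ≤ ∑ n ∈ S, Real.exp (-⟪w t, x n⟫) * γ := h1
      _ = ⟪∑ n ∈ S, Real.exp (-⟪w t, x n⟫) • x n, wbar⟫ := h2
      _ ≤ ‖∑ n ∈ S, Real.exp (-⟪w t, x n⟫) • x n‖ * ‖wbar‖ := real_inner_le_norm _ _
  have hIpos : ∀ t, 0 < γ * Real.exp (-⟪w t, x n0⟫) / ‖wbar‖ := fun t => by positivity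
  -- The upper bound function
  have hratio : ∀ t, ‖∑ n ∈ Sᶜ, Real.exp (-⟪w t, x n⟫) • x n‖ /
      ‖∑ n ∈ S, Real.exp (-⟪w t, x n⟫) • x n‖ ≤
      (∑ n ∈ Sᶜ, Real.exp (-⟪w t, x n⟫) * ‖x n‖) /
        (γ * Real.exp (-⟪w t, x n0⟫) / ‖wbar‖) := by
    intro t
    have hnum : ‖∑ n ∈ Sᶜ, Real.exp (-⟪w t, x n⟫) • x n‖ ≤
        ∑ n ∈ Sᶜ, Real.exp (-⟪w t, x n⟫) * ‖x n‖ := by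
      refine (norm_sum_le _ _).trans_eq ?_
      refine Finset.sum_congr rfl fun n _ => ?_
      rw [norm_smul, Real.norm_eq_abs, abs_of_pos (Real.exp_pos _)]
    exact div_le_div₀ (Finset.sum_nonneg fun n _ =>
      mul_nonneg (Real.exp_pos _).le (norm_nonneg _)) hnum (hIpos t) (hIlow t)
  -- Per-term exponential decay
  have hterm : ∀ n ∉ S, Tendsto (fun t => Real.exp (⟪w t, x n0⟫ - ⟪w t, x n⟫))
      atTop (𝓝 0) := by
    intro n hn
    have hcn : ⟪wbar, x n0 - x n⟫ ≤ γ - γbar := by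
      have e1 : ⟪wbar, x n0⟫ = γ := by rw [real_inner_comm]; exact hwn0
      have e2 : γbar ≤ ⟪wbar, x n⟫ := by rw [real_inner_comm]; exact hbar n hn
      rw [inner_sub_right]
      linarith
    have hinner : Tendsto (fun t => ⟪(g t)⁻¹ • ρ t, x n0 - x n⟫) atTop (𝓝 (0 : ℝ)) := by
      have := Filter.Tendsto.inner (𝕜 := ℝ) hρ (tendsto_const_nhds (x := x n0 - x n))
      simpa using this
    have hε : ∀ᶠ t in atTop, ⟪(g t)⁻¹ • ρ t, x n0 - x n⟫ ≤ (γbar - γ) / 2 :=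
      hinner.eventually (eventually_le_nhds (by linarith))
    have hgpos : ∀ᶠ t in atTop, 0 < g t := hg.eventually_gt_atTop 0
    have hbound : ∀ᶠ t in atTop, ⟪w t, x n0⟫ - ⟪w t, x n⟫ ≤ g t * ((γ - γbar) / 2) := by
      filter_upwards [hε, hgpos] with t h1 h2
      have hdec : ⟪w t, x n0⟫ - ⟪w t, x n⟫
          = g t * ⟪wbar, x n0 - x n⟫ + ⟪ρ t, x n0 - x n⟫ := by
        rw [hdecomp t]
        simp only [inner_sub_right, inner_add_left, real_inner_smul_left]
        ring
      have hρeq : ⟪ρ t, x n0 - x n⟫ = g t * ⟪(g t)⁻¹ • ρ t, x n0 - x n⟫ := by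
        rw [real_inner_smul_left]
        field_simp
      rw [hdec, hρeq]
      have hsum : ⟪wbar, x n0 - x n⟫ + ⟪(g t)⁻¹ • ρ t, x n0 - x n⟫ ≤ (γ - γbar) / 2 := by
        linarith
      calc g t * ⟪wbar, x n0 - x n⟫ + g t * ⟪(g t)⁻¹ • ρ t, x n0 - x n⟫
          = g t * (⟪wbar, x n0 - x n⟫ + ⟪(g t)⁻¹ • ρ t, x n0 - x n⟫) := by ring
        _ ≤ g t * ((γ - γbar) / 2) := mul_le_mul_of_nonneg_left hsum h2.le
    have hatbot : Tendsto (fun t => ⟪w t, x n0⟫ - ⟪w t, x n⟫) atTop atBot := by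
      refine tendsto_atBot_mono' atTop hbound ?_
      exact hg.atTop_mul_const_of_neg (by linarith)
    exact Real.tendsto_exp_atBot.comp hatbot
  -- U tends to 0
  have hUeq : ∀ t, (∑ n ∈ Sᶜ, Real.exp (-⟪w t, x n⟫) * ‖x n‖) /
        (γ * Real.exp (-⟪w t, x n0⟫) / ‖wbar‖) = ∑ n ∈ Sᶜ,
      (‖x n‖ * ‖wbar‖ / γ) * Real.exp (⟪w t, x n0⟫ - ⟪w t, x n⟫) := by
    intro t
    simp only [Finset.sum_div]
    refine Finset.sum_congr rfl fun n _ => ?_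
    rw [Real.exp_sub, Real.exp_neg (⟪w t, x n⟫), Real.exp_neg (⟪w t, x n0⟫)]
    have h1 := Real.exp_pos (⟪w t, x n⟫)
    have h2 := Real.exp_pos (⟪w t, x n0⟫)
    field_simp
  have hUt : Tendsto (fun t => (∑ n ∈ Sᶜ, Real.exp (-⟪w t, x n⟫) * ‖x n‖) /
      (γ * Real.exp (-⟪w t, x n0⟫) / ‖wbar‖)) atTop (𝓝 0) := by
    have : Tendsto (fun t => ∑ n ∈ Sᶜ,
        (‖x n‖ * ‖wbar‖ / γ) * Real.exp (⟪w t, x n0⟫ - ⟪w t, x n⟫)) atTop (𝓝 0) := by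
      have hz : (0 : ℝ) = ∑ n ∈ Sᶜ, (0 : ℝ) := by simp
      rw [hz]
      refine tendsto_finset_sum _ fun n hn => ?_
      have hnS : n ∉ S := Finset.mem_compl.1 hn
      have := (hterm n hnS).const_mul (‖x n‖ * ‖wbar‖ / γ)
      simpa using this
    exact (tendsto_congr hUeq).2 this
  exact squeeze_zero (fun t => div_nonneg (norm_nonneg _) (norm_nonneg _)) hratio hUt

end
end

section
/- Let w̄_∞ be a unit vector achieving margin γ > 0 on all data points x_n (⟨w̄_∞, x_n⟩ ≥ γ with equality exactly on a subset S with full-row-rank X_S). If w_t / ‖w_t‖ → w̄_∞ and L(w_t) → 0 for the exponential loss L(w) = ∑_n exp(-⟨w,x_n⟩), then every accumulation point z of the normalized negative gradients -∇L(w_t)/‖∇L(w_t)‖ has the form z = ∑_{n∈S} α_n x_n for some coefficients α_n ≥ 0. -/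
open Filter Topology Finset
open scoped RealInnerProductSpace BigOperators

noncomputable section

/-! The normalized negative gradient is `∑ₙ aₙ(t) xₙ` with weights
`aₙ = exp(-⟨w_t, xₙ⟩) / ‖∇L(w_t)‖`. Since `‖∇L‖ ≥ ⟨w̄, -∇L⟩ ≥ γ L`, every weight is at most `γ⁻¹`,
and for `m ∈ S`, `n ∉ S` the weight `aₙ` is at most `γ⁻¹ exp ⟨w_t, x_m - x_n⟩`. This tends to `0`
because `‖w_t‖ → ∞` (as `L(w_t) → 0`) in the direction `w̄`, and `⟨w̄, x_m - x_n⟩ < 0`. So the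
normalized gradient is a point of the compact set `{∑_{n ∈ S} αₙ xₙ : 0 ≤ α ≤ γ⁻¹}` plus an error
tending to `0`, and all its cluster points lie in that set. -/

theorem IsClosed.mem_of_mapClusterPt_add {E : Type*} [TopologicalSpace E] [AddGroup E]
    [IsTopologicalAddGroup E] [FirstCountableTopology E] {K : Set E} {g h : ℕ → E} {z : E}
    (hK : IsClosed K) (hg : ∀ t, g t ∈ K) (hh : Tendsto h atTop (𝓝 0))
    (hz : MapClusterPt z atTop fun t => g t + h t) : z ∈ K := by
  obtain ⟨ψ, hψ, hlim⟩ := hz.tendsto_subseq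
  have hgψ : Tendsto (g ∘ ψ) atTop (𝓝 (z - 0)) :=
    (hlim.sub (hh.comp hψ.tendsto_atTop)).congr fun t => by simp
  exact hK.mem_of_tendsto (sub_zero z ▸ hgψ) (Eventually.of_forall fun t => hg (ψ t))

theorem tendsto_norm_atTop_of_tendsto_inner_atTop {E ι : Type*} [NormedAddCommGroup E]
    [InnerProductSpace ℝ E] {l : Filter ι} {w : ι → E} {y : E} (hy : y ≠ 0)
    (h : Tendsto (fun t => ⟪w t, y⟫) l atTop) : Tendsto (fun t => ‖w t‖) l atTop := by
  have hy' : 0 < ‖y‖ := norm_pos_iff.mpr hy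
  refine tendsto_atTop_mono (fun t => ?_) (h.atTop_div_const hy')
  rw [div_le_iff₀ hy']
  exact real_inner_le_norm _ _

theorem tendsto_inner_atBot_of_tendsto_direction {E ι : Type*} [NormedAddCommGroup E]
    [InnerProductSpace ℝ E] {l : Filter ι} {w : ι → E} {v y : E}
    (hw : Tendsto (fun t => ‖w t‖) l atTop) (hdir : Tendsto (fun t => ‖w t‖⁻¹ • w t) l (𝓝 v))
    (hy : ⟪v, y⟫ < 0) : Tendsto (fun t => ⟪w t, y⟫) l atBot := by
  have hprod : Tendsto (fun t => ‖w t‖ * ⟪‖w t‖⁻¹ • w t, y⟫) l atBot :=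
    hw.atTop_mul_neg hy ((continuous_id.inner continuous_const).tendsto v |>.comp hdir)
  refine hprod.congr' ?_
  filter_upwards [hw.eventually_gt_atTop 0] with t ht
  rw [real_inner_smul_left, ← mul_assoc, mul_inv_cancel₀ ht.ne', one_mul]

section ExpLoss

variable {d N : ℕ} (x : Fin N → Euc d)

theorem exp_neg_inner_le_expLoss (u : Euc d) (n : Fin N) :
    Real.exp (-⟪u, x n⟫) ≤ expLoss x u :=
  Finset.single_le_sum (f := fun m => Real.exp (-⟪u, x m⟫))
    (fun _ _ => (Real.exp_pos _).le) (Finset.mem_univ n)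

theorem tendsto_inner_atTop_of_tendsto_expLoss {ι : Type*} {l : Filter ι} {w : ι → Euc d}
    (hloss : Tendsto (fun t => expLoss x (w t)) l (𝓝 0)) (n : Fin N) :
    Tendsto (fun t => ⟪w t, x n⟫) l atTop := by
  have hexp : Tendsto (fun t => Real.exp (-⟪w t, x n⟫)) l (𝓝 0) :=
    squeeze_zero (fun t => (Real.exp_pos _).le) (fun t => exp_neg_inner_le_expLoss x (w t) n)
      hloss
  exact tendsto_neg_atBot_iff.mp (Real.tendsto_exp_comp_nhds_zero.mp hexp)

variable {x}

theorem mul_expLoss_le_norm_negGrad {v : Euc d} (hv : ‖v‖ ≤ 1) {γ : ℝ}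
    (hmargin : ∀ n, γ ≤ ⟪v, x n⟫) (u : Euc d) : γ * expLoss x u ≤ ‖negGrad x u‖ :=
  calc γ * expLoss x u
      ≤ ∑ n, Real.exp (-⟪u, x n⟫) * ⟪v, x n⟫ := by
        rw [expLoss, Finset.mul_sum]
        exact Finset.sum_le_sum fun n _ => by
          rw [mul_comm]; exact mul_le_mul_of_nonneg_left (hmargin n) (Real.exp_pos _).le
    _ = ⟪v, negGrad x u⟫ := by simp only [negGrad, inner_sum, real_inner_smul_right]
    _ ≤ ‖v‖ * ‖negGrad x u‖ := real_inner_le_norm _ _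
    _ ≤ ‖negGrad x u‖ := mul_le_of_le_one_left (norm_nonneg _) hv

def gradWeight (x : Fin N → Euc d) (u : Euc d) (n : Fin N) : ℝ :=
  Real.exp (-⟪u, x n⟫) / ‖negGrad x u‖

theorem normalized_negGrad_eq_sum_gradWeight (u : Euc d) :
    ‖negGrad x u‖⁻¹ • negGrad x u = ∑ n, gradWeight x u n • x n := by
  simp only [negGrad, Finset.smul_sum, smul_smul, gradWeight, div_eq_inv_mul]

theorem gradWeight_nonneg (u : Euc d) (n : Fin N) : 0 ≤ gradWeight x u n :=
  div_nonneg (Real.exp_pos _).le (norm_nonneg _)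

variable {v : Euc d} {γ : ℝ}

/-- Keep only the term of index `m` in `‖∇L(u)‖ ≥ γ L(u)`. -/
theorem gradWeight_le_exp_inner_sub (hv : ‖v‖ ≤ 1) (hγ : 0 < γ) (hmargin : ∀ n, γ ≤ ⟪v, x n⟫)
    (u : Euc d) (m n : Fin N) :
    gradWeight x u n ≤ γ⁻¹ * Real.exp ⟪u, x m - x n⟫ := by
  have hm : γ * Real.exp (-⟪u, x m⟫) ≤ ‖negGrad x u‖ :=
    (mul_le_mul_of_nonneg_left (exp_neg_inner_le_expLoss x u m) hγ.le).trans
      (mul_expLoss_le_norm_negGrad hv hmargin u)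
  calc gradWeight x u n ≤ Real.exp (-⟪u, x n⟫) / (γ * Real.exp (-⟪u, x m⟫)) :=
        div_le_div_of_nonneg_left (Real.exp_pos _).le (by positivity) hm
    _ = γ⁻¹ * Real.exp ⟪u, x m - x n⟫ := by
        rw [inner_sub_right, Real.exp_sub, Real.exp_neg, Real.exp_neg]
        field_simp

theorem gradWeight_le_inv (hv : ‖v‖ ≤ 1) (hγ : 0 < γ) (hmargin : ∀ n, γ ≤ ⟪v, x n⟫)
    (u : Euc d) (n : Fin N) : gradWeight x u n ≤ γ⁻¹ := by
  simpa using gradWeight_le_exp_inner_sub hv hγ hmargin u n n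

theorem tendsto_gradWeight_zero (hv : ‖v‖ ≤ 1) (hγ : 0 < γ) (hmargin : ∀ n, γ ≤ ⟪v, x n⟫)
    {ι : Type*} {l : Filter ι} {w : ι → Euc d}
    (hw : Tendsto (fun t => ‖w t‖) l atTop) (hdir : Tendsto (fun t => ‖w t‖⁻¹ • w t) l (𝓝 v))
    {m n : Fin N} (hmn : ⟪v, x m⟫ < ⟪v, x n⟫) :
    Tendsto (fun t => gradWeight x (w t) n) l (𝓝 0) := by
  have hinner : Tendsto (fun t => ⟪w t, x m - x n⟫) l atBot :=
    tendsto_inner_atBot_of_tendsto_direction hw hdir (by rw [inner_sub_right]; linarith)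
  have hbound : Tendsto (fun t => γ⁻¹ * Real.exp ⟪w t, x m - x n⟫) l (𝓝 0) := by
    simpa using (Real.tendsto_exp_atBot.comp hinner).const_mul γ⁻¹
  exact squeeze_zero (fun t => gradWeight_nonneg (w t) n)
    (fun t => gradWeight_le_exp_inner_sub hv hγ hmargin (w t) m n) hbound

end ExpLoss

theorem accumulation_points_nonneg_combination_support_general {d N : ℕ}
    (x : Fin N → Euc d) (wbar : Euc d) (hwbar : ‖wbar‖ = 1)
    (γ : ℝ) (hγ : 0 < γ) (hmargin : ∀ n, γ ≤ ⟪wbar, x n⟫)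
    (S : Finset (Fin N)) (hS : ∀ n, n ∈ S ↔ ⟪wbar, x n⟫ = γ) (hSne : S.Nonempty)
    (w : ℕ → Euc d)
    (hdir : Tendsto (fun t => ‖w t‖⁻¹ • w t) atTop (𝓝 wbar))
    (hloss : Tendsto (fun t => expLoss x (w t)) atTop (𝓝 0)) :
    ∀ z : Euc d,
      MapClusterPt z atTop (fun t => ‖negGrad x (w t)‖⁻¹ • negGrad x (w t)) →
        ∃ α : Fin N → ℝ, (∀ n, 0 ≤ α n) ∧ z = ∑ n ∈ S, α n • x n := by
  intro z hz
  obtain ⟨m, hm⟩ := hSne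
  have hγm : ⟪wbar, x m⟫ = γ := (hS m).mp hm
  have hxm : x m ≠ 0 := fun h => hγ.ne (by rw [← hγm, h, inner_zero_right])
  have hw := tendsto_norm_atTop_of_tendsto_inner_atTop hxm
    (tendsto_inner_atTop_of_tendsto_expLoss x hloss m)
  have hout : Tendsto (fun t => ∑ n ∈ Sᶜ, gradWeight x (w t) n • x n) atTop (𝓝 0) := by
    have hn0 : ∀ n ∈ Sᶜ, Tendsto (fun t => gradWeight x (w t) n • x n) atTop (𝓝 0) :=
      fun n hn => by
        have hmn : ⟪wbar, x m⟫ < ⟪wbar, x n⟫ := hγm ▸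
          (hmargin n).lt_of_ne fun h => Finset.mem_compl.mp hn ((hS n).mpr h.symm)
        simpa using (tendsto_gradWeight_zero hwbar.le hγ hmargin hw hdir hmn).smul_const (x n)
    simpa using tendsto_finsetSum Sᶜ hn0
  set K := (fun β : Fin N → ℝ => ∑ n ∈ S, β n • x n) '' Set.Icc 0 (fun _ => γ⁻¹)
  have hK : IsClosed K := (isCompact_Icc.image (by fun_prop)).isClosed
  have hin : ∀ t, ∑ n ∈ S, gradWeight x (w t) n • x n ∈ K := fun t =>
    ⟨gradWeight x (w t), ⟨fun n => gradWeight_nonneg (w t) n,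
      fun n => gradWeight_le_inv hwbar.le hγ hmargin (w t) n⟩, rfl⟩
  obtain ⟨α, hα, rfl⟩ := hK.mem_of_mapClusterPt_add hin hout <| by
    simpa only [normalized_negGrad_eq_sum_gradWeight, ← Finset.sum_add_sum_compl S] using hz
  exact ⟨α, hα.1, rfl⟩

/-- if `w_t/‖w_t‖ → w̄` (a unit vector with margin `γ > 0`, attained exactly
on a linearly independent support set `S`) and `L(w_t) → 0` for the exponential loss, then
every accumulation point of the normalized negative gradients `-∇L(w_t)/‖∇L(w_t)‖` is a
nonnegative combination of the support vectors. -/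
theorem accumulation_points_nonneg_combination_support {d N : ℕ}
    (x : Fin N → Euc d) (wbar : Euc d) (hwbar : ‖wbar‖ = 1)
    (γ : ℝ) (hγ : 0 < γ) (hmargin : ∀ n, γ ≤ ⟪wbar, x n⟫)
    (S : Finset (Fin N)) (hS : ∀ n, n ∈ S ↔ ⟪wbar, x n⟫ = γ) (hSne : S.Nonempty)
    (hrank : LinearIndependent ℝ (fun n : S => x n))
    (w : ℕ → Euc d)
    (hdir : Tendsto (fun t => ‖w t‖⁻¹ • w t) atTop (𝓝 wbar))
    (hloss : Tendsto (fun t => expLoss x (w t)) atTop (𝓝 0)) :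
    ∀ z : Euc d,
      MapClusterPt z atTop (fun t => ‖negGrad x (w t)‖⁻¹ • negGrad x (w t)) →
        ∃ α : Fin N → ℝ, (∀ n, 0 ≤ α n) ∧ z = ∑ n ∈ S, α n • x n :=
  accumulation_points_nonneg_combination_support_general x wbar hwbar γ hγ hmargin S hS hSne w hdir
    hloss

end
end
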